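/- Let f be a primitive polynomial of degree k over F₂ and let ℓ ≥ 1, with i = ⌈log₂ ℓ⌉. Consider the set A of binary sequences whose minimal zero polynomial is f^ℓ. Then A is invariant under the shift operator E, every sequence in A has least period (2^k − 1)·2^i, each orbit of A under iterates of E has exactly (2^k − 1)·2^i elements, and the number of such orbits is exactly 2^{(ℓ−1)k − i}. -/

import Mathlib

open Polynomial

noncomputable def polyApp (f : Polynomial (ZMod 2)) (s : ℕ → ZMod 2) : ℕ → ZMod 2 :=
  fun i => f.sum fun j c => c * s (i + j)

def HasPeriodDvd (s : ℕ → ZMod 2) (N : ℕ) : Prop := ∀ i, s (i + N) = s i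

def IsLeastPeriod (s : ℕ → ZMod 2) (e : ℕ) : Prop :=
  0 < e ∧ HasPeriodDvd s e ∧ ∀ m, 0 < m → HasPeriodDvd s m → e ≤ m

def IsMinZeroPoly (g : Polynomial (ZMod 2)) (s : ℕ → ZMod 2) : Prop :=
  g ≠ 0 ∧ polyApp g s = 0 ∧
    ∀ h : Polynomial (ZMod 2), h ≠ 0 → polyApp h s = 0 → g.natDegree ≤ h.natDegree

def IsExponent (f : Polynomial (ZMod 2)) (e : ℕ) : Prop :=
  0 < e ∧ f ∣ X ^ e - 1 ∧ ∀ m, 0 < m → f ∣ X ^ m - 1 → e ≤ m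

def IsPrimitivePoly (f : Polynomial (ZMod 2)) (k : ℕ) : Prop :=
  Irreducible f ∧ f.natDegree = k ∧ f.coeff 0 ≠ 0 ∧ IsExponent f (2 ^ k - 1)

/-- The shift operator on sequences. -/
def shiftE (s : ℕ → ZMod 2) : ℕ → ZMod 2 := fun i => s (i + 1)

/-- The orbit of a sequence under iterates of the shift operator. -/
def shiftOrbit (s : ℕ → ZMod 2) : Set (ℕ → ZMod 2) :=
  {t | ∃ j : ℕ, t = fun i => s (i + j)}

/-!
Read `polyApp g` as `g` evaluated at the shift operator. The polynomials annihilating `s ∈ A` are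
closed under gcd (Bézout), and `f ^ ℓ` is up to units the only one of minimal degree, so they are
exactly the multiples of `f ^ ℓ`. Hence `s` has period `N` iff `f ^ ℓ ∣ X ^ N - 1`, and
the least such `N` is `(2 ^ k - 1) * 2 ^ ⌈log₂ ℓ⌉`: writing `N = 2 ^ a * b` with `b` odd,
`X ^ N - 1 = (X ^ b - 1) ^ (2 ^ a)` in characteristic 2, and `X ^ b - 1` is squarefree.
Multiplication by `X` preserves this property since `f` is coprime to `X`, so `A` is shift
invariant.
Finally `A = ker f ^ ℓ \ ker f ^ (ℓ - 1)`, where the kernel of a polynomial of degree `d` is the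
solution space of a linear recurrence of order `d`, so `|A| = 2 ^ (ℓ k) - 2 ^ ((ℓ - 1) k)`, and
the orbits partition `A` into blocks of equal size.
-/

open Polynomial Function Set

noncomputable def shiftOp : Module.End (ZMod 2) (ℕ → ZMod 2) :=
  LinearMap.funLeft (ZMod 2) (ZMod 2) (· + 1)

lemma shiftOp_pow_apply (n : ℕ) (s : ℕ → ZMod 2) : (shiftOp ^ n) s = fun i => s (i + n) := by
  induction n generalizing s with
  | zero => rfl
  | succ n ih =>
    rw [pow_succ, Module.End.mul_apply, ih]
    funext i
    simp only [shiftOp, LinearMap.funLeft_apply, add_assoc]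

lemma polyApp_eq_aeval (g : (ZMod 2)[X]) : polyApp g = aeval shiftOp g := by
  funext s i
  rw [aeval_eq_sum_range, polyApp, Polynomial.sum_over_range _ fun _ => zero_mul _]
  simp [shiftOp_pow_apply]

lemma polyApp_mul (g h : (ZMod 2)[X]) (s : ℕ → ZMod 2) :
    polyApp (g * h) s = polyApp g (polyApp h s) := by
  simp only [polyApp_eq_aeval, map_mul, Module.End.mul_apply]

lemma polyApp_zero_right (g : (ZMod 2)[X]) : polyApp g 0 = 0 := by
  rw [polyApp_eq_aeval, map_zero]

lemma polyApp_X_pow (n : ℕ) (s : ℕ → ZMod 2) : polyApp (X ^ n) s = fun i => s (i + n) := by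
  rw [polyApp_eq_aeval, map_pow, aeval_X, shiftOp_pow_apply]

lemma polyApp_X (s : ℕ → ZMod 2) : polyApp X s = shiftE s := by
  rw [← pow_one X, polyApp_X_pow]
  rfl

lemma polyApp_X_pow_sub_one_eq_zero_iff (N : ℕ) (s : ℕ → ZMod 2) :
    polyApp (X ^ N - 1) s = 0 ↔ HasPeriodDvd s N := by
  rw [polyApp_eq_aeval, map_sub, map_one, LinearMap.sub_apply, sub_eq_zero, ← polyApp_eq_aeval,
    polyApp_X_pow, Module.End.one_apply, funext_iff]
  rfl

lemma polyApp_eq_zero_of_dvd {g h : (ZMod 2)[X]} {s : ℕ → ZMod 2} (hg : polyApp g s = 0)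
    (hgh : g ∣ h) : polyApp h s = 0 := by
  obtain ⟨q, rfl⟩ := hgh
  rw [mul_comm, polyApp_mul, hg, polyApp_zero_right]

lemma polyApp_gcd_eq_zero {g h : (ZMod 2)[X]} {s : ℕ → ZMod 2} (hg : polyApp g s = 0)
    (hh : polyApp h s = 0) : polyApp (EuclideanDomain.gcd g h) s = 0 := by
  rw [EuclideanDomain.gcd_eq_gcd_ab, polyApp_eq_aeval, map_add, LinearMap.add_apply,
    ← polyApp_eq_aeval, ← polyApp_eq_aeval, polyApp_eq_zero_of_dvd hg (dvd_mul_right _ _),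
    polyApp_eq_zero_of_dvd hh (dvd_mul_right _ _), add_zero]

def GeneratesAnnihilator (g : (ZMod 2)[X]) (s : ℕ → ZMod 2) : Prop :=
  ∀ h, polyApp h s = 0 ↔ g ∣ h

section GeneratesAnnihilator

variable {g : (ZMod 2)[X]} {s : ℕ → ZMod 2}

lemma isMinZeroPoly_iff_generatesAnnihilator (hg : g ≠ 0) :
    IsMinZeroPoly g s ↔ GeneratesAnnihilator g s := by
  constructor
  · rintro ⟨-, hgs, hmin⟩ h
    refine ⟨fun hh => ?_, polyApp_eq_zero_of_dvd hgs⟩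
    have hd0 : EuclideanDomain.gcd g h ≠ 0 := fun h0 =>
      hg (EuclideanDomain.gcd_eq_zero_iff.1 h0).1
    have hassoc : Associated (EuclideanDomain.gcd g h) g :=
      associated_of_dvd_of_natDegree_le (EuclideanDomain.gcd_dvd_left g h) hg
        (hmin _ hd0 (polyApp_gcd_eq_zero hgs hh))
    exact hassoc.symm.dvd.trans (EuclideanDomain.gcd_dvd_right g h)
  · intro hgen
    exact ⟨hg, (hgen g).2 dvd_rfl, fun h hh0 hh => natDegree_le_of_dvd ((hgen h).1 hh) hh0⟩

lemma ne_zero_and_isMinZeroPoly_iff (hg : g ≠ 0) (hgu : ¬IsUnit g) :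
    s ≠ 0 ∧ IsMinZeroPoly g s ↔ GeneratesAnnihilator g s := by
  rw [isMinZeroPoly_iff_generatesAnnihilator hg, and_iff_right_iff_imp]
  rintro hgen rfl
  exact hgu (isUnit_of_dvd_one ((hgen 1).1 (polyApp_zero_right 1)))

lemma generatesAnnihilator_pow_iff {f : (ZMod 2)[X]} (hf : Prime f) {ℓ : ℕ} (hℓ : ℓ ≠ 0) :
    GeneratesAnnihilator (f ^ ℓ) s ↔
      polyApp (f ^ ℓ) s = 0 ∧ polyApp (f ^ (ℓ - 1)) s ≠ 0 := by
  constructor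
  · intro hgen
    refine ⟨(hgen _).2 dvd_rfl, fun hs' => ?_⟩
    have := (pow_dvd_pow_iff hf.ne_zero hf.not_isUnit).1 ((hgen _).1 hs')
    omega
  · rintro ⟨hs, hs'⟩ h
    refine ⟨fun hh => ?_, polyApp_eq_zero_of_dvd hs⟩
    obtain ⟨j, hjℓ, hassoc⟩ :=
      (dvd_prime_pow hf ℓ).1 (EuclideanDomain.gcd_dvd_left (f ^ ℓ) h)
    have hj : polyApp (f ^ j) s = 0 :=
      polyApp_eq_zero_of_dvd (polyApp_gcd_eq_zero hs hh) hassoc.dvd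
    obtain rfl : j = ℓ := by
      by_contra hne
      exact hs' (polyApp_eq_zero_of_dvd hj (pow_dvd_pow f (by omega)))
    exact hassoc.symm.dvd.trans (EuclideanDomain.gcd_dvd_right _ h)

lemma GeneratesAnnihilator.shiftE (hs : GeneratesAnnihilator g s) (hgX : IsCoprime g X) :
    GeneratesAnnihilator g (shiftE s) := fun h => by
  rw [← polyApp_X, ← polyApp_mul, hs]
  exact ⟨hgX.dvd_of_dvd_mul_right, fun hgh => hgh.mul_right X⟩

lemma GeneratesAnnihilator.isLeastPeriod_iff (hs : GeneratesAnnihilator g s) {N : ℕ} :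
    IsLeastPeriod s N ↔ IsExponent g N := by
  have hperiod (M : ℕ) : HasPeriodDvd s M ↔ g ∣ X ^ M - 1 := by
    rw [← polyApp_X_pow_sub_one_eq_zero_iff, hs]
  simp only [IsLeastPeriod, IsExponent, hperiod]

end GeneratesAnnihilator

lemma squarefree_X_pow_sub_one {b : ℕ} (hb : Odd b) : Squarefree (X ^ b - 1 : (ZMod 2)[X]) := by
  have hsep : (X ^ b - C 1 : (ZMod 2)[X]).Separable :=
    separable_X_pow_sub_C 1 (by simp [(ZMod.natCast_eq_one_iff_odd).2 hb]) one_ne_zero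
  simpa using hsep.squarefree

lemma X_pow_sub_one_pow_two_pow (b a : ℕ) :
    (X ^ b - 1 : (ZMod 2)[X]) ^ 2 ^ a = X ^ (b * 2 ^ a) - 1 := by
  rw [sub_pow_char_pow, ← pow_mul, one_pow]

lemma le_of_pow_dvd_pow_of_squarefree {R : Type*} [CommMonoidWithZero R] [IsCancelMulZero R]
    {p g : R} (hp : Prime p) (hg : Squarefree g) {ℓ n : ℕ} (h : p ^ ℓ ∣ g ^ n) :
    ℓ ≤ n := by
  have hmult : emultiplicity p g ≤ 1 :=
    ((squarefree_iff_emultiplicity_le_one g).1 hg p).resolve_right hp.not_isUnit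
  have hℓ := pow_dvd_iff_le_emultiplicity.1 h
  rw [emultiplicity_pow hp] at hℓ
  have hle : (n : ℕ∞) * emultiplicity p g ≤ n * 1 := by gcongr
  exact_mod_cast hℓ.trans (hle.trans_eq (mul_one _))

section IsExponent

variable {f : (ZMod 2)[X]} {e : ℕ}

lemma IsExponent.isCoprime_X (hf : Irreducible f) (he : IsExponent f e) : IsCoprime f X := by
  refine (hf.coprime_iff_not_dvd).2 fun hX => hf.not_isUnit (isUnit_of_dvd_one ?_)
  have hXe : f ∣ X ^ e := hX.trans (dvd_pow_self X he.1.ne')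
  simpa using dvd_sub hXe he.2.1

lemma IsExponent.pow (hf : Irreducible f) (he : IsExponent f e) {ℓ : ℕ} (hℓ : ℓ ≠ 0) :
    IsExponent (f ^ ℓ) (e * 2 ^ Nat.clog 2 ℓ) := by
  refine ⟨Nat.mul_pos he.1 (by positivity), ?_, fun m hm hdvd => ?_⟩
  · calc f ^ ℓ ∣ f ^ 2 ^ Nat.clog 2 ℓ := pow_dvd_pow f (Nat.le_pow_clog one_lt_two ℓ)
      _ ∣ (X ^ e - 1) ^ 2 ^ Nat.clog 2 ℓ := pow_dvd_pow_of_dvd he.2.1 _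
      _ = X ^ (e * 2 ^ Nat.clog 2 ℓ) - 1 := X_pow_sub_one_pow_two_pow _ _
  obtain ⟨a, b, hb, rfl⟩ := Nat.exists_eq_two_pow_mul_odd hm.ne'
  rw [mul_comm, ← X_pow_sub_one_pow_two_pow] at hdvd
  have hfb : f ∣ X ^ b - 1 := hf.prime.dvd_of_dvd_pow ((dvd_pow_self f hℓ).trans hdvd)
  have hℓa : ℓ ≤ 2 ^ a :=
    le_of_pow_dvd_pow_of_squarefree hf.prime (squarefree_X_pow_sub_one hb) hdvd
  calc e * 2 ^ Nat.clog 2 ℓ ≤ b * 2 ^ a :=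
        Nat.mul_le_mul (he.2.2 b hb.pos hfb)
          (Nat.pow_le_pow_right two_pos ((Nat.clog_le_iff_le_pow one_lt_two).2 hℓa))
    _ = 2 ^ a * b := mul_comm _ _

end IsExponent

/-- Its characteristic polynomial is `g` when `g` is monic. -/
def linearRecurrenceOf (g : (ZMod 2)[X]) : LinearRecurrence (ZMod 2) :=
  ⟨g.natDegree, fun i => -g.coeff i⟩

lemma polyApp_eq_zero_iff_isSolution {g : (ZMod 2)[X]} (hg : g.Monic) (s : ℕ → ZMod 2) :
    polyApp g s = 0 ↔ (linearRecurrenceOf g).IsSolution s := by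
  refine funext_iff.trans (forall_congr' fun n => ?_)
  rw [polyApp, Polynomial.sum_over_range _ fun _ => zero_mul _, Finset.sum_range_succ,
    hg.coeff_natDegree, one_mul, Pi.zero_apply, add_eq_zero_iff_eq_neg', ← Finset.sum_neg_distrib,
    ← Fin.sum_univ_eq_sum_range (fun j => -(g.coeff j * s (n + j)))]
  simp only [linearRecurrenceOf, neg_mul]
  rfl

lemma ncard_setOf_polyApp_eq_zero {g : (ZMod 2)[X]} (hg : g.Monic) :
    {s | polyApp g s = 0}.ncard = 2 ^ g.natDegree := by
  have hsol : {s | polyApp g s = 0} = (linearRecurrenceOf g).solSpace := by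
    ext s
    exact (polyApp_eq_zero_iff_isSolution hg s).trans
      ((linearRecurrenceOf g).is_sol_iff_mem_solSpace s)
  rw [hsol, ← Nat.card_coe_set_eq, SetLike.coe_sort_coe,
    Nat.card_congr (linearRecurrenceOf g).toInit.toEquiv]
  simp [linearRecurrenceOf]

lemma monic_of_ne_zero_zmod_two {g : (ZMod 2)[X]} (hg : g ≠ 0) : g.Monic := by
  have : ∀ a : ZMod 2, a ≠ 0 → a = 1 := by decide
  exact this _ (leadingCoeff_ne_zero.2 hg)

lemma ncard_setOf_polyApp_pow_eq_zero_and_ne_zero {f : (ZMod 2)[X]} (hf : f ≠ 0) {ℓ : ℕ}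
    (hℓ : ℓ ≠ 0) :
    {s | polyApp (f ^ ℓ) s = 0 ∧ polyApp (f ^ (ℓ - 1)) s ≠ 0}.ncard =
      2 ^ ((ℓ - 1) * f.natDegree) * (2 ^ f.natDegree - 1) := by
  have hsub : {s | polyApp (f ^ (ℓ - 1)) s = 0} ⊆ {s | polyApp (f ^ ℓ) s = 0} :=
    fun s hs => polyApp_eq_zero_of_dvd hs (pow_dvd_pow f (Nat.sub_le ℓ 1))
  have hcard (j : ℕ) : {s | polyApp (f ^ j) s = 0}.ncard = 2 ^ (j * f.natDegree) := by
    rw [ncard_setOf_polyApp_eq_zero (monic_of_ne_zero_zmod_two (pow_ne_zero j hf)), natDegree_pow]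
  have hfin : {s | polyApp (f ^ (ℓ - 1)) s = 0}.Finite :=
    finite_of_ncard_ne_zero (by rw [hcard]; positivity)
  obtain ⟨m, rfl⟩ := Nat.exists_eq_add_one.2 (Nat.pos_of_ne_zero hℓ)
  change ({s | polyApp (f ^ (m + 1)) s = 0} \ {s | polyApp (f ^ (m + 1 - 1)) s = 0}).ncard = _
  rw [ncard_sdiff hsub hfin, hcard, hcard, Nat.add_sub_cancel, add_mul, one_mul, pow_add,
    Nat.mul_sub, mul_one]

section PeriodicOrbit

variable {α : Type*} {f : α → α}

lemma ncard_range_iterate {x : α} (hx : x ∈ periodicPts f) :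
    (range (f^[·] x)).ncard = minimalPeriod f x := by
  have hrange : range (f^[·] x) = (f^[·] x) '' Iio (minimalPeriod f x) := by
    refine (image_subset_range _ _).antisymm' ?_
    rintro _ ⟨n, rfl⟩
    exact ⟨n % minimalPeriod f x, Nat.mod_lt n (minimalPeriod_pos_of_mem_periodicPts hx),
      iterate_mod_minimalPeriod_eq⟩
  rw [hrange, iterate_injOn_Iio_minimalPeriod.ncard_image, ncard_Iio_nat]

lemma range_iterate_eq_of_mem {x y : α} (hx : x ∈ periodicPts f) (hy : y ∈ range (f^[·] x)) :
    range (f^[·] y) = range (f^[·] x) := by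
  obtain ⟨m, rfl⟩ := hy
  refine Subset.antisymm ?_ ?_ <;> rintro _ ⟨n, rfl⟩
  · exact ⟨n + m, iterate_add_apply f n m x⟩
  · -- from `f^[m] x`, go `m` times around the cycle and then `n` more steps, minus the first `m`
    have hm : m ≤ minimalPeriod f x * m :=
      Nat.le_mul_of_pos_left m (minimalPeriod_pos_of_mem_periodicPts hx)
    refine ⟨n + minimalPeriod f x * m - m, ?_⟩
    dsimp only
    rw [← iterate_add_apply, Nat.sub_add_cancel (by omega), iterate_add_apply,
      ((isPeriodicPt_minimalPeriod f x).mul_const m).eq]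

theorem ncard_image_range_iterate_mul {A : Set α} (hA : A.Finite) (hfA : MapsTo f A A) {N : ℕ}
    (hN : 0 < N) (hper : ∀ x ∈ A, minimalPeriod f x = N) :
    ((fun x => range (f^[·] x)) '' A).ncard * N = A.ncard := by
  classical
  set orbit := fun x => range (f^[·] x)
  have hperiodic (x : α) (hx : x ∈ A) : x ∈ periodicPts f :=
    minimalPeriod_pos_iff_mem_periodicPts.1 ((hper x hx).symm ▸ hN)
  lift A to Finset α using hA
  have hfiber (x : α) (hx : x ∈ A) : (A.filter (orbit · = orbit x) : Set α) = orbit x := by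
    rw [Finset.coe_filter]
    refine Subset.antisymm (fun y ⟨_, hyx⟩ => hyx ▸ ⟨0, rfl⟩) fun y hy => ⟨?_, ?_⟩
    · obtain ⟨n, rfl⟩ := hy
      exact hfA.iterate n hx
    · exact range_iterate_eq_of_mem (hperiodic x hx) hy
  rw [ncard_coe_finset, ← Finset.coe_image, ncard_coe_finset,
    Finset.card_eq_sum_card_image orbit A, Finset.sum_const_nat]
  rintro _ hO
  obtain ⟨x, hx, rfl⟩ := Finset.mem_image.1 hO
  rw [← ncard_coe_finset, hfiber x hx, ncard_range_iterate (hperiodic x hx), hper x hx]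

end PeriodicOrbit

lemma shiftE_iterate (j : ℕ) (s : ℕ → ZMod 2) : shiftE^[j] s = fun i => s (i + j) := by
  induction j generalizing s with
  | zero => rfl
  | succ j ih =>
    rw [iterate_succ_apply, ih]
    funext i
    simp only [shiftE, add_assoc]

lemma shiftOrbit_eq_range (s : ℕ → ZMod 2) : shiftOrbit s = range (shiftE^[·] s) := by
  ext t
  simp only [shiftOrbit, shiftE_iterate, mem_ofPred_eq, mem_range, eq_comm]

lemma isPeriodicPt_shiftE_iff {N : ℕ} {s : ℕ → ZMod 2} :
    IsPeriodicPt shiftE N s ↔ HasPeriodDvd s N := by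
  rw [IsPeriodicPt, IsFixedPt, shiftE_iterate, funext_iff]
  rfl

lemma IsLeastPeriod.minimalPeriod_eq {N : ℕ} {s : ℕ → ZMod 2} (h : IsLeastPeriod s N) :
    minimalPeriod shiftE s = N := by
  obtain ⟨hN, hperiod, hmin⟩ := h
  have hs : IsPeriodicPt shiftE N s := isPeriodicPt_shiftE_iff.2 hperiod
  refine (hs.minimalPeriod_le hN).antisymm (hmin _ (hs.minimalPeriod_pos hN) ?_)
  exact isPeriodicPt_shiftE_iff.1 (isPeriodicPt_minimalPeriod shiftE s)

lemma IsLeastPeriod.ncard_shiftOrbit {N : ℕ} {s : ℕ → ZMod 2} (h : IsLeastPeriod s N) :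
    (shiftOrbit s).ncard = N := by
  rw [shiftOrbit_eq_range, ncard_range_iterate, h.minimalPeriod_eq]
  exact mk_mem_periodicPts h.1 (isPeriodicPt_shiftE_iff.2 h.2.1)

lemma ncard_shiftOrbits_mul {A : Set (ℕ → ZMod 2)} (hA : A.Finite)
    (hshift : ∀ s ∈ A, shiftE s ∈ A) {N : ℕ} (hN : 0 < N)
    (hper : ∀ s ∈ A, IsLeastPeriod s N) :
    {O | ∃ s ∈ A, O = shiftOrbit s}.ncard * N = A.ncard := by
  have horbits : {O | ∃ s ∈ A, O = shiftOrbit s} = (fun s => range (shiftE^[·] s)) '' A := by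
    ext O
    simp only [shiftOrbit_eq_range, mem_ofPred_eq, mem_image, eq_comm]
  rw [horbits]
  exact ncard_image_range_iterate_mul hA hshift hN fun s hs => (hper s hs).minimalPeriod_eq

theorem enumerate_sequences_of_primitive_power
    (f : Polynomial (ZMod 2)) (k : ℕ) (hf : IsPrimitivePoly f k)
    (ℓ : ℕ) (hℓ : 1 ≤ ℓ)
    (A : Set (ℕ → ZMod 2))
    (hA : A = {s | s ≠ 0 ∧ IsMinZeroPoly (f ^ ℓ) s}) :
    (∀ s ∈ A, shiftE s ∈ A) ∧
    (∀ s ∈ A, IsLeastPeriod s ((2 ^ k - 1) * 2 ^ (Nat.clog 2 ℓ))) ∧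
    (∀ s ∈ A, (shiftOrbit s).ncard = (2 ^ k - 1) * 2 ^ (Nat.clog 2 ℓ)) ∧
    {O : Set (ℕ → ZMod 2) | ∃ s ∈ A, O = shiftOrbit s}.ncard =
      2 ^ ((ℓ - 1) * k - Nat.clog 2 ℓ) := by
  obtain ⟨hirr, hdeg, -, hexp⟩ := hf
  have hℓ0 : ℓ ≠ 0 := Nat.one_le_iff_ne_zero.1 hℓ
  have hk : 0 < k := Nat.pos_of_ne_zero (by rintro rfl; exact absurd hexp.1 (by norm_num))
  have h2k : 1 < 2 ^ k := Nat.one_lt_two_pow hk.ne'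
  have hA' (s : ℕ → ZMod 2) : s ∈ A ↔ GeneratesAnnihilator (f ^ ℓ) s := by
    rw [hA]
    exact ne_zero_and_isMinZeroPoly_iff (pow_ne_zero ℓ hirr.ne_zero)
      ((isUnit_pow_iff hℓ0).not.2 hirr.not_isUnit)
  have hper (s : ℕ → ZMod 2) (hs : s ∈ A) :
      IsLeastPeriod s ((2 ^ k - 1) * 2 ^ Nat.clog 2 ℓ) :=
    ((hA' s).1 hs).isLeastPeriod_iff.2 (hexp.pow hirr hℓ0)
  have hshift (s : ℕ → ZMod 2) (hs : s ∈ A) : shiftE s ∈ A :=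
    (hA' _).2 (((hA' s).1 hs).shiftE (hexp.isCoprime_X hirr).pow_left)
  refine ⟨hshift, hper, fun s hs => (hper s hs).ncard_shiftOrbit, ?_⟩
  have hcard : A.ncard = 2 ^ ((ℓ - 1) * k) * (2 ^ k - 1) := by
    rw [← hdeg, ← ncard_setOf_polyApp_pow_eq_zero_and_ne_zero hirr.ne_zero hℓ0]
    congr 1
    ext s
    exact (hA' s).trans (generatesAnnihilator_pow_iff hirr.prime hℓ0)
  have hN : 0 < (2 ^ k - 1) * 2 ^ Nat.clog 2 ℓ := Nat.mul_pos (by omega) (by positivity)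
  have hfin : A.Finite :=
    finite_of_ncard_ne_zero (by rw [hcard]; exact Nat.mul_ne_zero (by positivity) (by omega))
  have horbits := ncard_shiftOrbits_mul hfin hshift hN hper
  have hclog : Nat.clog 2 ℓ ≤ (ℓ - 1) * k := by
    refine (Nat.clog_le_iff_le_pow one_lt_two).2 (le_trans ?_ (Nat.pow_le_pow_right two_pos
      (Nat.le_mul_of_pos_right _ hk)))
    have := Nat.lt_two_pow_self (n := ℓ - 1)
    omega
  rw [hcard, ← Nat.sub_add_cancel hclog, pow_add] at horbits
  exact Nat.eq_of_mul_eq_mul_right hN (by rw [horbits]; ring)
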